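/- Let a, p₁, p₂, b be nonzero complex constants with 9ab² = −4. If f is an entire function satisfying f(z)² + a·(f'(z))² = p₁·e^{bz} + p₂·e^{−bz} for all z ∈ ℂ, then there exists ε ∈ {1, −1} such that 3b²·f(z) − 4·f''(z) = 4εb·f'(z) for all z ∈ ℂ. -/

import Mathlib

/-!
Put `U = 3bf + 2f'` and `V = 3bf - 2f'`. Since `9ab² = -4`, the equation reads
`UV = 9b²(p₁e^{bz} + p₂e^{-bz})`, and together with its derivative it gives
`f'·(F'G - FG' - 4bFG) = 0` for `F = U² - 18b²p₁e^{bz}` and `G = V² - 18b²p₂e^{-bz}`.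
As `f'` is not identically zero, `F'G - FG' = 4bFG`. If `F ≡ 0` then `2U' = bU`, and if `G ≡ 0`
then `2V' = -bV`: these are the two signs of the conclusion. Otherwise the Wronskian identity
forces `F = c e^{4bz} G` with `c ≠ 0`, and eliminating `U` shows that
`w = 2c e^{3bz} V² + 18b²(p₁ - c p₂ e^{2bz})` satisfies `w² = 324b⁴(p₁² + cp₂²)(1 + c e^{4bz})`.
This is impossible: if `p₁² + cp₂² ≠ 0` the right side has simple zeros, and otherwise `w ≡ 0`
makes `V²` a nonvanishing multiple of `e^{2bz} - p₁/(cp₂)`, which has simple zeros.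
-/

open Complex Filter Topology

theorem Differentiable.eq_zero_of_mul_eq_zero {φ ψ : ℂ → ℂ} (hψ : Differentiable ℂ ψ)
    (h : ∀ z, φ z * ψ z = 0) {z₀ : ℂ} (hφ : ContinuousAt φ z₀) (hz₀ : φ z₀ ≠ 0) : ψ = 0 :=
  (analyticOnNhd_univ_iff_differentiable.2 hψ).eq_of_eventuallyEq analyticOnNhd_const <| by
    filter_upwards [hφ.eventually_ne hz₀] with z hz using (mul_eq_zero.1 (h z)).resolve_left hz

theorem exists_eq_const_mul_of_deriv_mul_eq {N M : ℂ → ℂ}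
    (hN : Differentiable ℂ N) (hM : Differentiable ℂ M)
    (h : ∀ z, deriv N z * M z = N z * deriv M z) {z₀ : ℂ} (hz₀ : M z₀ ≠ 0) :
    ∃ c, ∀ z, N z = c * M z := by
  obtain ⟨r, hr, hball⟩ := Metric.isOpen_iff.1 (isOpen_ne_fun hM.continuous continuous_const) z₀ hz₀
  have hMne : ∀ z ∈ Metric.ball z₀ r, M z ≠ 0 := hball
  have hconst : ∀ z ∈ Metric.ball z₀ r, N z / M z = N z₀ / M z₀ := fun z hz =>
    Metric.isOpen_ball.is_const_of_deriv_eq_zero (f := fun z => N z / M z)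
      (convex_ball z₀ r).isPreconnected
      (fun w hw => ((hN w).div (hM w) (hMne w hw)).differentiableWithinAt)
      (fun w hw => by simp [deriv_fun_div (hN w) (hM w) (hMne w hw), h w]) hz
      (Metric.mem_ball_self hr)
  have hNM : N =ᶠ[𝓝 z₀] fun z => N z₀ / M z₀ * M z := by
    filter_upwards [Metric.ball_mem_nhds z₀ hr] with z hz
    rw [← hconst z hz, div_mul_cancel₀ _ (hMne z hz)]
  exact ⟨_, congrFun ((analyticOnNhd_univ_iff_differentiable.2 hN).eq_of_eventuallyEq
    (analyticOnNhd_univ_iff_differentiable.2 (hM.const_mul _)) hNM)⟩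

theorem hasDerivAt_exp_const_mul (b z : ℂ) :
    HasDerivAt (fun z => exp (b * z)) (b * exp (b * z)) z := by
  simpa [mul_comm] using ((hasDerivAt_id z).const_mul b).cexp

theorem hasDerivAt_exp_const_mul_pow (b z : ℂ) (n : ℕ) :
    HasDerivAt (fun z => exp (b * z) ^ n) (n * b * exp (b * z) ^ n) z := by
  simp_rw [← exp_nat_mul, ← mul_assoc]
  exact hasDerivAt_exp_const_mul _ z

theorem exists_exp_const_mul_pow_eq {b w : ℂ} (hb : b ≠ 0) {n : ℕ} (hn : n ≠ 0) (hw : w ≠ 0) :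
    ∃ z, exp (b * z) ^ n = w :=
  ⟨log w / (n * b), by rw [← exp_nat_mul]; field_simp; exact exp_log hw⟩

theorem exp_mul_exp_neg_mul (b z : ℂ) : exp (b * z) * exp (-b * z) = 1 := by
  rw [← exp_add, ← add_mul, add_neg_cancel, zero_mul, exp_zero]

theorem exists_eq_const_mul_exp_mul_of_wronskian {F G : ℂ → ℂ} (hF : Differentiable ℂ F)
    (hG : Differentiable ℂ G) {k : ℂ}
    (h : ∀ z, deriv F z * G z - F z * deriv G z = k * (F z * G z)) {z₀ : ℂ} (hz₀ : G z₀ ≠ 0) :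
    ∃ c, ∀ z, F z = c * exp (k * z) * G z := by
  have hM z : HasDerivAt (fun z => exp (k * z) * G z)
      (k * exp (k * z) * G z + exp (k * z) * deriv G z) z :=
    (hasDerivAt_exp_const_mul k z).mul (hG z).hasDerivAt
  obtain ⟨c, hc⟩ := exists_eq_const_mul_of_deriv_mul_eq hF (fun z => (hM z).differentiableAt)
    (fun z => by rw [(hM z).deriv]; linear_combination exp (k * z) * h z)
    (mul_ne_zero (exp_ne_zero _) hz₀)
  exact ⟨c, fun z => by rw [hc z, mul_assoc]⟩

theorem exp_const_mul_pow_sub_ne_mul_sq {b d : ℂ} (hb : b ≠ 0) {n : ℕ} (hn : n ≠ 0) (hd : d ≠ 0)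
    {φ v : ℂ → ℂ} (hφ : Differentiable ℂ φ) (hφ₀ : ∀ z, φ z ≠ 0) (hv : Differentiable ℂ v) :
    ¬ ∀ z, exp (b * z) ^ n - d = φ z * v z ^ 2 := by
  intro h
  obtain ⟨z₀, hz₀⟩ := exists_exp_const_mul_pow_eq hb hn hd
  have hv₀ : v z₀ = 0 := by
    have h₀ : φ z₀ * v z₀ ^ 2 = 0 := by rw [← h, hz₀, sub_self]
    simpa [hφ₀ z₀] using h₀
  have h' := (hasDerivAt_exp_const_mul_pow b z₀ n).sub_const d
  rw [funext h] at h'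
  have := h'.unique ((hφ z₀).hasDerivAt.mul ((hv z₀).hasDerivAt.pow 2))
  simp [hv₀, hz₀, hn, hb, hd] at this

namespace FermatTypeODE

def IsSolution (a b p₁ p₂ : ℂ) (f : ℂ → ℂ) : Prop :=
  ∀ z, f z ^ 2 + a * deriv f z ^ 2 = p₁ * exp (b * z) + p₂ * exp (-b * z)

/-- `3bf - 2f'` is `-U (-b) f`, and the function `G` is `F (-b) p₂ f`. -/
noncomputable def U (b : ℂ) (f : ℂ → ℂ) (z : ℂ) : ℂ := 3 * b * f z + 2 * deriv f z

noncomputable def F (b p : ℂ) (f : ℂ → ℂ) (z : ℂ) : ℂ := U b f z ^ 2 - 18 * b ^ 2 * p * exp (b * z)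

variable {a b c p p₁ p₂ : ℂ} {f : ℂ → ℂ}

theorem IsSolution.neg (h : IsSolution a b p₁ p₂ f) : IsSolution a (-b) p₂ p₁ f := fun z => by
  rw [h z, neg_neg, add_comm]

theorem hasDerivAt_U (hf : Differentiable ℂ f) (z : ℂ) :
    HasDerivAt (U b f) (3 * b * deriv f z + 2 * deriv (deriv f) z) z :=
  ((hf z).hasDerivAt.const_mul (3 * b)).add ((hf.deriv z).hasDerivAt.const_mul 2)

theorem hasDerivAt_F (hf : Differentiable ℂ f) (z : ℂ) :
    HasDerivAt (F b p f) (2 * U b f z * (3 * b * deriv f z + 2 * deriv (deriv f) z)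
      - 18 * b ^ 3 * p * exp (b * z)) z :=
  (((hasDerivAt_U hf z).pow 2).sub
    ((hasDerivAt_exp_const_mul b z).const_mul (18 * b ^ 2 * p))).congr_deriv (by ring)

@[fun_prop]
theorem differentiable_F (hf : Differentiable ℂ f) : Differentiable ℂ (F b p f) :=
  fun z => (hasDerivAt_F hf z).differentiableAt

theorem IsSolution.deriv_eq (h : IsSolution a b p₁ p₂ f) (hf : Differentiable ℂ f) (z : ℂ) :
    2 * f z * deriv f z + 2 * a * deriv f z * deriv (deriv f) z
      = b * (p₁ * exp (b * z) - p₂ * exp (-b * z)) := by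
  have hL := ((hf z).hasDerivAt.pow 2).add (((hf.deriv z).hasDerivAt.pow 2).const_mul a)
  have hR := ((hasDerivAt_exp_const_mul b z).const_mul p₁).add
    ((hasDerivAt_exp_const_mul (-b) z).const_mul p₂)
  linear_combination hL.unique (hR.congr_of_eventuallyEq (Eventually.of_forall h))

theorem U_mul_U_neg (h : IsSolution a b p₁ p₂ f) (hab : 9 * a * b ^ 2 = -4) (z : ℂ) :
    U b f z * U (-b) f z = -9 * b ^ 2 * (p₁ * exp (b * z) + p₂ * exp (-b * z)) := by
  simp only [U]
  linear_combination (-9 * b ^ 2) * h z + deriv f z ^ 2 * hab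

theorem four_deriv_mul_deriv_F (h : IsSolution a b p₁ p₂ f) (hf : Differentiable ℂ f)
    (hab : 9 * a * b ^ 2 = -4) (z : ℂ) :
    4 * deriv f z * deriv (F b p₁ f) z = b * (3 * U b f z + U (-b) f z) * F b p₁ f z := by
  rw [(hasDerivAt_F hf z).deriv]
  simp only [F, U]
  linear_combination (-18 * b ^ 2 * (3 * b * f z + 2 * deriv f z)) * h.deriv_eq hf z
    - 18 * b ^ 3 * (3 * b * f z + 2 * deriv f z) * h z
    + (4 * deriv (deriv f) z + 2 * b * deriv f z) * deriv f z * (3 * b * f z + 2 * deriv f z) * hab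

theorem IsSolution.exists_deriv_ne_zero (h : IsSolution a b p₁ p₂ f) (hf : Differentiable ℂ f)
    (hb : b ≠ 0) (hp₁ : p₁ ≠ 0) : ∃ z, deriv f z ≠ 0 := by
  by_contra! h₀
  have hrhs z : p₁ * exp (b * z) - p₂ * exp (-b * z) = 0 := by
    have := h.deriv_eq hf z
    simp only [h₀, funext h₀, deriv_const] at this
    simpa [hb] using this.symm
  obtain ⟨z₁, hz₁⟩ := exists_exp_const_mul_pow_eq hb two_ne_zero (neg_ne_zero.2 one_ne_zero)
  have hp : p₁ = p₂ := by simpa [sub_eq_zero] using hrhs 0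
  have hp' : -p₁ = p₂ := by
    linear_combination exp (b * z₁) * hrhs z₁ - p₁ * hz₁ + p₂ * exp_mul_exp_neg_mul b z₁
  exact hp₁ (by linear_combination (hp - hp') / 2)

theorem IsSolution.wronskian_F (h : IsSolution a b p₁ p₂ f) (hf : Differentiable ℂ f)
    (hab : 9 * a * b ^ 2 = -4) (hb : b ≠ 0) (hp₁ : p₁ ≠ 0) (z : ℂ) :
    deriv (F b p₁ f) z * F (-b) p₂ f z - F b p₁ f z * deriv (F (-b) p₂ f) z
      = 4 * b * (F b p₁ f z * F (-b) p₂ f z) := by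
  obtain ⟨z₁, hz₁⟩ := h.exists_deriv_ne_zero hf hb hp₁
  have hab' : 9 * a * (-b) ^ 2 = -4 := by rwa [neg_sq]
  have hmul z : 4 * deriv f z * (deriv (F b p₁ f) z * F (-b) p₂ f z
      - F b p₁ f z * deriv (F (-b) p₂ f) z - 4 * b * (F b p₁ f z * F (-b) p₂ f z)) = 0 := by
    have h₁ := four_deriv_mul_deriv_F h hf hab z
    have h₂ := four_deriv_mul_deriv_F h.neg hf hab' z
    simp only [neg_neg, U] at h₁ h₂ ⊢
    linear_combination F (-b) p₂ f z * h₁ - F b p₁ f z * h₂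
  have hzero := Differentiable.eq_zero_of_mul_eq_zero (by fun_prop) hmul
    (hf.deriv.continuous.const_mul 4).continuousAt (mul_ne_zero (by norm_num) hz₁)
  exact sub_eq_zero.1 (congrFun hzero z)

theorem ode_of_F_eq_zero (hb : b ≠ 0) (hp : p ≠ 0) (hf : Differentiable ℂ f)
    (hF : ∀ z, F b p f z = 0) (z : ℂ) :
    3 * b ^ 2 * f z - 4 * deriv (deriv f) z = 4 * b * deriv f z := by
  have hF' : deriv (F b p f) z = 0 := by simp [funext hF]
  rw [(hasDerivAt_F hf z).deriv] at hF'
  have hFz : U b f z ^ 2 - 18 * b ^ 2 * p * exp (b * z) = 0 := hF z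
  have hU : U b f z ≠ 0 := by
    intro hU
    simp [hU, hb, hp] at hFz
  have hode : U b f z * (2 * (3 * b * deriv f z + 2 * deriv (deriv f) z) - b * U b f z) = 0 := by
    linear_combination hF' - b * hFz
  simp only [U] at hode hU
  linear_combination -(mul_eq_zero.1 hode).resolve_left hU

theorem sq_eq_of_eq_const_mul {u v x y : ℂ} (hxy : x * y = 1)
    (huv : u * v = -9 * b ^ 2 * (p₁ * x + p₂ * y))
    (hF : u ^ 2 - 18 * b ^ 2 * p₁ * x = c * x ^ 4 * (v ^ 2 - 18 * b ^ 2 * p₂ * y)) :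
    (2 * c * x ^ 3 * v ^ 2 + 18 * b ^ 2 * (p₁ - c * p₂ * x ^ 2)) ^ 2
      = 324 * b ^ 4 * (p₁ ^ 2 + c * p₂ ^ 2) * (1 + c * x ^ 4) := by
  linear_combination 4 * c * x ^ 2 * (u * v - 9 * b ^ 2 * (p₁ * x + p₂ * y)) * huv
    - 4 * c * x ^ 2 * v ^ 2 * hF
    + 4 * c * (18 * b ^ 2 * c * p₂ * x ^ 5 * v ^ 2
      + 81 * b ^ 4 * p₂ * (x * (p₁ * x + p₂ * y) + p₁ * x ^ 2 + p₂)) * hxy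

theorem IsSolution.not_F_eq_const_mul (h : IsSolution a b p₁ p₂ f) (hf : Differentiable ℂ f)
    (hab : 9 * a * b ^ 2 = -4) (hb : b ≠ 0) (hp₁ : p₁ ≠ 0) (hp₂ : p₂ ≠ 0) (hc : c ≠ 0) :
    ¬ ∀ z, F b p₁ f z = c * exp (b * z) ^ 4 * F (-b) p₂ f z := by
  intro hFc
  have hV : Differentiable ℂ (U (-b) f) := fun z => (hasDerivAt_U hf z).differentiableAt
  set w : ℂ → ℂ := fun z => 2 * c * exp (b * z) ^ 3 * U (-b) f z ^ 2
    + 18 * b ^ 2 * (p₁ - c * p₂ * exp (b * z) ^ 2) with hw_def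
  have hwd : Differentiable ℂ w := by rw [hw_def]; fun_prop
  set K := 324 * b ^ 4 * (p₁ ^ 2 + c * p₂ ^ 2)
  have hw z : w z ^ 2 = K * (1 + c * exp (b * z) ^ 4) :=
    sq_eq_of_eq_const_mul (exp_mul_exp_neg_mul b z) (U_mul_U_neg h hab z)
      (by simpa only [F, neg_sq] using hFc z)
  by_cases hK : K = 0
  · have hw₀ z := pow_eq_zero_iff two_ne_zero |>.1 ((hw z).trans (by rw [hK, zero_mul]))
    refine exp_const_mul_pow_sub_ne_mul_sq hb two_ne_zero (div_ne_zero hp₁ (mul_ne_zero hc hp₂))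
      (φ := fun z => exp (b * z) ^ 3 / (9 * b ^ 2 * p₂)) (by fun_prop) (fun z => by simp [hb, hp₂])
      hV fun z => ?_
    field_simp
    linear_combination (-1 / 2) * hw₀ z
  · refine exp_const_mul_pow_sub_ne_mul_sq hb four_ne_zero (neg_ne_zero.2 (inv_ne_zero hc))
      (φ := fun _ => (K * c)⁻¹) (by fun_prop) (fun z => by simp [hK, hc]) hwd fun z => ?_
    rw [hw z]
    field_simp
    ring

end FermatTypeODE

open FermatTypeODE

theorem stmt_14_general (a p₁ p₂ b : ℂ) (hp₁ : p₁ ≠ 0) (hp₂ : p₂ ≠ 0) (hb : b ≠ 0)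
    (hab : 9 * a * b ^ 2 = -4)
    (f : ℂ → ℂ) (hf : Differentiable ℂ f)
    (heq : ∀ z : ℂ, f z ^ 2 + a * (deriv f z) ^ 2
        = p₁ * Complex.exp (b * z) + p₂ * Complex.exp (-b * z)) :
    ∃ ε : ℂ, (ε = 1 ∨ ε = -1) ∧
      ∀ z : ℂ, 3 * b ^ 2 * f z - 4 * deriv (deriv f) z = 4 * ε * b * deriv f z := by
  have h : IsSolution a b p₁ p₂ f := heq
  by_cases h₂ : ∀ z, F (-b) p₂ f z = 0
  · refine ⟨-1, Or.inr rfl, fun z => ?_⟩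
    linear_combination ode_of_F_eq_zero (neg_ne_zero.2 hb) hp₂ hf h₂ z
  by_cases h₁ : ∀ z, F b p₁ f z = 0
  · exact ⟨1, Or.inl rfl, fun z => by simpa using ode_of_F_eq_zero hb hp₁ hf h₁ z⟩
  obtain ⟨z₁, hz₁⟩ := not_forall.1 h₁
  obtain ⟨z₂, hz₂⟩ := not_forall.1 h₂
  obtain ⟨c, hc⟩ := exists_eq_const_mul_exp_mul_of_wronskian (differentiable_F hf)
    (differentiable_F hf) (h.wronskian_F hf hab hb hp₁) hz₂
  have hc₀ : c ≠ 0 := by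
    rintro rfl
    exact hz₁ (by simpa using hc z₁)
  refine (h.not_F_eq_const_mul hf hab hb hp₁ hp₂ hc₀ fun z => ?_).elim
  rw [hc z, ← exp_nat_mul]
  ring_nf

theorem stmt_14 (a p₁ p₂ b : ℂ) (ha : a ≠ 0) (hp₁ : p₁ ≠ 0) (hp₂ : p₂ ≠ 0) (hb : b ≠ 0)
    (hab : 9 * a * b ^ 2 = -4)
    (f : ℂ → ℂ) (hf : Differentiable ℂ f)
    (heq : ∀ z : ℂ, f z ^ 2 + a * (deriv f z) ^ 2
        = p₁ * Complex.exp (b * z) + p₂ * Complex.exp (-b * z)) :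
    ∃ ε : ℂ, (ε = 1 ∨ ε = -1) ∧
      ∀ z : ℂ, 3 * b ^ 2 * f z - 4 * deriv (deriv f) z = 4 * ε * b * deriv f z :=
  stmt_14_general a p₁ p₂ b hp₁ hp₂ hb hab f hf heq
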